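/- Let $K, P$ be positive integers with $2K \le P$ and let $q \le K$ be a positive integer. Then $\sum_{u=q}^{K} \binom{K}{u}\binom{P-K}{K-u} \le \binom{K}{q}^2 \binom{P-q}{K-q}$, and dividing by $\binom{P}{K}$ gives $p_{s,q} \le \binom{K}{q}^2 / \binom{P}{q}$. -/

import Mathlib

/-!
Each term of the sum is bounded by weighting it with `u.choose q ≥ 1`. The weighted sum counts
triples (key ring `A`, common part `A ∩ B`, fixed `q`-subset of `A ∩ B`); choosing the `q`-subset
first gives `K.choose q * (P - q).choose (K - q)` by Vandermonde's identity. Dividing by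
`P.choose K` uses `(P - q).choose (K - q) / P.choose K = K.choose q / P.choose q`.
-/

open Finset

namespace Nat

theorem sum_Icc_choose_sub_mul_choose (M K q : ℕ) (hqK : q ≤ K) :
    ∑ u ∈ Icc q K, (K - q).choose (u - q) * M.choose (K - u) = (K - q + M).choose (K - q) := by
  rw [add_choose_eq, Finset.Nat.sum_antidiagonal_eq_sum_range_succ_mk, ← Ico_add_one_right_eq_Icc,
    sum_Ico_eq_sum_range, show K + 1 - q = (K - q).succ by omega]
  refine sum_congr rfl fun i _ => ?_
  rw [Nat.add_sub_cancel_left, Nat.sub_sub]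

theorem sum_Icc_choose_mul_choose_le (M K q : ℕ) (hqK : q ≤ K) :
    ∑ u ∈ Icc q K, K.choose u * M.choose (K - u) ≤ K.choose q * (K - q + M).choose (K - q) := by
  calc ∑ u ∈ Icc q K, K.choose u * M.choose (K - u)
      ≤ ∑ u ∈ Icc q K, K.choose u * u.choose q * M.choose (K - u) := by
        refine sum_le_sum fun u hu => Nat.mul_le_mul_right _ (Nat.le_mul_of_pos_right _ ?_)
        exact choose_pos (mem_Icc.1 hu).1
    _ = K.choose q * ∑ u ∈ Icc q K, (K - q).choose (u - q) * M.choose (K - u) := by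
        rw [mul_sum]
        refine sum_congr rfl fun u hu => ?_
        rw [choose_mul (mem_Icc.1 hu).1, mul_assoc]
    _ = K.choose q * (K - q + M).choose (K - q) := by
        rw [sum_Icc_choose_sub_mul_choose M K q hqK]

theorem cast_choose_sub_div_choose {P K q : ℕ} (hqK : q ≤ K) (hKP : K ≤ P) :
    ((P - q).choose (K - q) : ℝ) / P.choose K = K.choose q / P.choose q := by
  have hPK : (P.choose K : ℝ) ≠ 0 := by exact_mod_cast (choose_pos hKP).ne'
  have hPq : (P.choose q : ℝ) ≠ 0 := by exact_mod_cast (choose_pos (hqK.trans hKP)).ne'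
  rw [div_eq_div_iff hPK hPq]
  exact_mod_cast (mul_comm _ _).trans ((choose_mul hqK).symm.trans (mul_comm _ _))

end Nat

theorem stmt17_general (K P q : ℕ) (hKP : 2 * K ≤ P)
    (hqK : q ≤ K) :
    (∑ u ∈ Finset.Icc q K, K.choose u * (P - K).choose (K - u)
      ≤ K.choose q ^ 2 * (P - q).choose (K - q))
    ∧ (∑ u ∈ Finset.Icc q K,
        (K.choose u * (P - K).choose (K - u) : ℝ) / (P.choose K : ℝ))
      ≤ (K.choose q : ℝ) ^ 2 / (P.choose q : ℝ) := by
  have hKP' : K ≤ P := by omega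
  have hsum : ∑ u ∈ Icc q K, K.choose u * (P - K).choose (K - u)
      ≤ K.choose q * (P - q).choose (K - q) := by
    simpa only [show K - q + (P - K) = P - q by omega] using
      Nat.sum_Icc_choose_mul_choose_le (P - K) K q hqK
  refine ⟨hsum.trans (Nat.mul_le_mul_right _ (Nat.le_self_pow two_ne_zero _)), ?_⟩
  have hPK : (0 : ℝ) ≤ P.choose K := Nat.cast_nonneg _
  calc ∑ u ∈ Icc q K, (K.choose u * (P - K).choose (K - u) : ℝ) / P.choose K
      ≤ (K.choose q * (P - q).choose (K - q) : ℝ) / P.choose K := by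
        rw [← sum_div]
        exact div_le_div_of_nonneg_right (by exact_mod_cast hsum) hPK
    _ = (K.choose q : ℝ) ^ 2 / P.choose q := by
        rw [mul_div_assoc, Nat.cast_choose_sub_div_choose hqK hKP', mul_div_assoc', sq]

theorem stmt17 (K P q : ℕ) (hK1 : 1 ≤ K) (hKP : 2 * K ≤ P)
    (hq1 : 1 ≤ q) (hqK : q ≤ K) :
    (∑ u ∈ Finset.Icc q K, K.choose u * (P - K).choose (K - u)
      ≤ K.choose q ^ 2 * (P - q).choose (K - q))
    ∧ (∑ u ∈ Finset.Icc q K,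
        (K.choose u * (P - K).choose (K - u) : ℝ) / (P.choose K : ℝ))
      ≤ (K.choose q : ℝ) ^ 2 / (P.choose q : ℝ) :=
  stmt17_general K P q hKP hqK
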